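/- arXiv:2410.11012 — 8 statements merged into one kernel-verified Lean document; each statement's English description precedes it below -/
import Mathlib

section
/- Let (W, b) be a competitive TLN on n neurons with b_k ≤ 0 for some k. Then the set of fixed point supports satisfies FP(W, b) = FP(W|_{[n]\{k}}, b|_{[n]\{k}}); in particular, k ∉ σ for all σ ∈ FP(W, b). -/
/-- A (nonnegative) fixed point of the TLN (W, b): x = [Wx + b]_+ componentwise. -/
def tlnFixPt {ι : Type*} [Fintype ι] (W : Matrix ι ι ℝ) (b : ι → ℝ) (x : ι → ℝ) : Prop :=
  (∀ i, 0 ≤ x i) ∧ ∀ i, x i = max 0 (∑ j, W i j * x j + b i)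

/-- FP(W, b): the set of supports of fixed points of the TLN (W, b). -/
def tlnFP {ι : Type*} [Fintype ι] (W : Matrix ι ι ℝ) (b : ι → ℝ) : Set (Set ι) :=
  {σ | ∃ x, tlnFixPt W b x ∧ σ = {i | 0 < x i}}

/-- Any fixed point of a competitive TLN with `b k ≤ 0` has `x k = 0`. -/
lemma tln_fixpt_zero_at (n : ℕ) (W : Matrix (Fin n) (Fin n) ℝ) (b : Fin n → ℝ)
    (hW : ∀ i j, W i j ≤ 0) (k : Fin n) (hb : b k ≤ 0)
    {x : Fin n → ℝ} (hx : tlnFixPt W b x) : x k = 0 := by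
  obtain ⟨hnn, hfix⟩ := hx
  have hsum : ∑ j, W k j * x j ≤ 0 :=
    Finset.sum_nonpos fun j _ => mul_nonpos_of_nonpos_of_nonneg (hW k j) (hnn j)
  have : ∑ j, W k j * x j + b k ≤ 0 := add_nonpos hsum hb
  rw [hfix k, max_eq_left this]

/-- Sum over the subtype `{i // i ≠ k}` equals the sum over `univ.erase k`. -/
lemma sum_subtype_ne (n : ℕ) (k : Fin n) (f : Fin n → ℝ) :
    ∑ j : {i : Fin n // i ≠ k}, f j.val = ∑ j ∈ Finset.univ.erase k, f j := by
  exact (Finset.sum_subtype (Finset.univ.erase k) (fun j => by simp) f).symm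

/-- If (W, b) is a competitive TLN with b_k ≤ 0, then
FP(W, b) = FP(W|_{[n]\{k}}, b|_{[n]\{k}}) (identifying supports of the restricted
network with their images in [n]); in particular k ∉ σ for all σ ∈ FP(W, b). -/
theorem competitive_tln_FP_remove_nonpositive_input (n : ℕ)
    (W : Matrix (Fin n) (Fin n) ℝ) (b : Fin n → ℝ)
    (hW : ∀ i j, W i j ≤ 0) (hdiag : ∀ i, W i i = 0)
    (k : Fin n) (hb : b k ≤ 0) :
    tlnFP W b = (fun σ : Set {i : Fin n // i ≠ k} => (Subtype.val '' σ)) ''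
        tlnFP (W.submatrix (Subtype.val : {i : Fin n // i ≠ k} → Fin n) Subtype.val)
          (b ∘ Subtype.val) ∧
      ∀ σ ∈ tlnFP W b, k ∉ σ := by
  constructor
  · ext σ
    constructor
    · rintro ⟨x, hx, rfl⟩
      have hxk : x k = 0 := tln_fixpt_zero_at n W b hW k hb hx
      obtain ⟨hnn, hfix⟩ := hx
      refine ⟨{j | 0 < x j.val}, ⟨fun j => x j.val, ⟨fun i => hnn i.val, fun i => ?_⟩, rfl⟩, ?_⟩
      · have : ∑ j : {i : Fin n // i ≠ k}, W i.val j.val * x j.val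
            = ∑ j, W i.val j * x j := by
          rw [sum_subtype_ne n k (fun j => W i.val j * x j)]
          rw [← Finset.sum_erase_add _ _ (Finset.mem_univ k), hxk, mul_zero, add_zero]
        simpa [Matrix.submatrix_apply, this] using hfix i.val
      · ext i
        simp only [Set.mem_setOf_eq, Set.mem_image]
        constructor
        · rintro ⟨⟨j, hj⟩, hj2, rfl⟩; exact hj2
        · intro hi
          have hik : i ≠ k := fun h => by rw [h, hxk] at hi; exact lt_irrefl 0 hi
          exact ⟨⟨i, hik⟩, hi, rfl⟩
    · rintro ⟨τ, ⟨y, ⟨hnn, hfix⟩, rfl⟩, rfl⟩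
      classical
      refine ⟨fun i => if h : i = k then 0 else y ⟨i, h⟩, ⟨?_, ?_⟩, ?_⟩
      · intro i; by_cases h : i = k <;> simp [h, hnn]
      · intro i
        have hsum : ∀ i' : Fin n,
            ∑ j, W i' j * (if h : j = k then 0 else y ⟨j, h⟩)
              = ∑ j : {i : Fin n // i ≠ k}, W i' j.val * y j := by
          intro i'
          rw [← Finset.sum_erase_add _ _ (Finset.mem_univ k), dif_pos rfl, mul_zero, add_zero,
            ← sum_subtype_ne n k (fun j => W i' j * (if h : j = k then 0 else y ⟨j, h⟩))]
          exact Finset.sum_congr rfl fun j _ => by rw [dif_neg j.prop]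
        by_cases h : i = k
        · subst h
          simp only [dif_pos rfl, hsum i]
          refine (max_eq_left (add_nonpos ?_ hb)).symm
          exact Finset.sum_nonpos fun j _ =>
            mul_nonpos_of_nonpos_of_nonneg (hW i j.val) (hnn j)
        · simp only [dif_neg h, hsum i]
          simpa using hfix ⟨i, h⟩
      · ext i
        simp only [Set.mem_image, Set.mem_setOf_eq]
        constructor
        · rintro ⟨⟨j, hj⟩, hj2, rfl⟩
          simpa [dif_neg hj] using hj2
        · intro hi
          by_cases h : i = k
          · rw [dif_pos h] at hi; exact absurd hi (lt_irrefl 0)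
          · rw [dif_neg h] at hi; exact ⟨⟨i, h⟩, hi, rfl⟩
  · rintro σ ⟨x, hx, rfl⟩
    simp [tln_fixpt_zero_at n W b hW k hb hx]
end

section
/- Let (W, θ) be a TLN on n neurons with uniform input θ > 0, and let τ ⊆ [n] be simply-embedded: for every j ∉ τ, W_{ij} is the same value γ_j for all i ∈ τ. Let ω = [n]\τ. Then for any σ ⊆ [n] and any i ∈ τ, the Cramer determinant s_i^σ := det((I - W_{σ∪{i}})_i ; θ·𝟙) factors as s_i^σ = (1/θ)·s_i^{σ∩ω}·s_i^{σ∩τ}, and moreover the value s_i^{σ∩ω} is the same for every i ∈ τ. -/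
/-!
Subtracting row `i` from every other row indexed by `τ` turns the Cramer matrix of `σ ∪ {i}`
block triangular: in such a row the entries in the constant column `i` cancel, and so do the
entries in columns `j ∉ τ`, because `W a j = W i j`. One diagonal block is the Cramer matrix of
`(σ \ τ) ∪ {i}`, the other a matrix `D` built from `σ ∩ τ` alone. Running the same reduction on
`σ ∩ τ` leaves the `1 × 1` block `θ` instead, so `s_i^{σ∩τ} = θ · det D`.

For `i, k ∈ τ`, the transposition of `i` and `k` carries the Cramer matrix of `ρ ∪ {i}` onto that
of `ρ ∪ {k}` whenever `ρ` misses `τ`, since columns outside `τ` do not distinguish `i` from `k`.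
-/

/-- Cramer's determinant s_i^σ = det((I - W_{σ∪{i}})_i ; θ·𝟙): the determinant of
I - W restricted to rows and columns in σ ∪ {i}, with the column indexed by i
replaced by the constant vector θ. -/
noncomputable def sdet {ι : Type*} [Fintype ι] [DecidableEq ι]
    (W : Matrix ι ι ℝ) (θ : ℝ) (σ : Finset ι) (i : ι) : ℝ :=
  Matrix.det (Matrix.of (fun a b : {x // x ∈ insert i σ} =>
    if (b : ι) = i then θ
    else (if (a : ι) = (b : ι) then (1 : ℝ) else 0) - W (a : ι) (b : ι)))

namespace Matrix

variable {α ι R : Type*} [Fintype α] [DecidableEq α] [DecidableEq ι] [CommRing R]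

theorem det_add_vecMulVec_row_self (M : Matrix α α R) (c : α → R) {i : α} (hc : c i = 0) :
    (M + vecMulVec c (M i)).det = M.det := by
  have hE : (1 + vecMulVec c (Pi.single i 1)).det = 1 := by
    rw [vecMulVec_eq Unit, det_one_add_replicateCol_mul_replicateRow, single_dotProduct, one_mul,
      hc, add_zero]
  calc (M + vecMulVec c (M i)).det = ((1 + vecMulVec c (Pi.single i 1)) * M).det := by
        rw [add_mul, one_mul, vecMulVec_mul, single_vecMul, one_smul]; rfl
    _ = M.det := by rw [det_mul, hE, one_mul]

theorem det_eq_det_toSquareBlockProp_mul_of_rows_eq (M : Matrix α α R) (i : α) (q : α → Prop)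
    [DecidablePred q] (hqi : ¬ q i) (hrow : ∀ a, q a → ∀ b, ¬ q b → M a b = M i b) :
    M.det = (M.toSquareBlockProp (¬ q ·)).det *
      ((of fun a b => M a b - M i b).toSquareBlockProp q).det := by
  set c : α → R := fun a => if q a then -1 else 0
  set M' := M + vecMulVec c (M i)
  have hM' : ∀ a b, M' a b = if q a then M a b - M i b else M a b := by
    intro a b
    by_cases ha : q a <;> simp [M', c, vecMulVec_apply, ha, sub_eq_add_neg]
  have hM'_block : ∀ a, q a → ∀ b, ¬ q b → M' a b = 0 := fun a ha b hb => by
    rw [hM', if_pos ha, hrow a ha b hb, sub_self]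
  rw [← det_add_vecMulVec_row_self M c (if_neg hqi), twoBlockTriangular_det' M' q hM'_block,
    mul_comm]
  congr 2 <;> ext a b <;> simp [toSquareBlockProp_def, hM', a.2]

def principalMinor (M : Matrix ι ι R) (s : Finset ι) : R :=
  (M.submatrix ((↑) : s → ι) (↑)).det

theorem principalMinor_singleton (M : Matrix ι ι R) (i : ι) : M.principalMinor {i} = M i i :=
  det_unique _

theorem det_toSquareBlockProp_submatrix (M : Matrix ι ι R) (s : Finset ι) (p : ι → Prop)
    [DecidablePred p] :
    ((M.submatrix ((↑) : s → ι) (↑)).toSquareBlockProp (p ·)).det =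
      M.principalMinor (s.filter p) := by
  let e : {x : s // p x} ≃ s.filter p := (Equiv.subtypeSubtypeEquivSubtypeInter (· ∈ s) p).trans
    (Equiv.subtypeEquivRight fun _ => Finset.mem_filter.symm)
  exact det_submatrix_equiv_self e (M.submatrix ((↑) : s.filter p → ι) (↑))

theorem principalMinor_insert_eq_mul (M : Matrix ι ι R) (σ t : Finset ι) {i : ι} (hi : i ∈ t)
    (hcol : ∀ a, M a i = M i i) (hrow : ∀ a ∈ t, ∀ b ∉ t, M a b = M i b) :
    M.principalMinor (insert i σ) = M.principalMinor (insert i (σ \ t)) *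
      (of fun a b => M a b - M i b).principalMinor ((σ ∩ t).erase i) := by
  let i' : (insert i σ : Finset ι) := ⟨i, Finset.mem_insert_self i σ⟩
  have key := det_eq_det_toSquareBlockProp_mul_of_rows_eq (M.submatrix ((↑) : _ → ι) (↑)) i'
    (fun x => x.1 ∈ t ∧ x.1 ≠ i) (fun h => h.2 rfl) (fun a ha b hb => by
      rcases not_and_or.mp hb with hbt | hbi
      · exact hrow a ha.1 b hbt
      · obtain rfl : b = i' := Subtype.ext (not_not.mp hbi)
        exact hcol a)
  rw [principalMinor, key]
  congr 1
  · rw [det_toSquareBlockProp_submatrix M _ (fun x => ¬ (x ∈ t ∧ x ≠ i))]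
    congr 1
    ext x
    by_cases hx : x = i <;> simp [hx, hi]
  · refine (det_toSquareBlockProp_submatrix (of fun a b => M a b - M i b) _
      (fun x => x ∈ t ∧ x ≠ i)).trans ?_
    congr 1
    ext x
    by_cases hx : x = i <;> simp [hx]

theorem principalMinor_congr_equiv {s t : Finset ι} (e : s ≃ t)
    (M N : Matrix ι ι R) (h : ∀ a b, N (e a) (e b) = M a b) :
    M.principalMinor s = N.principalMinor t := by
  rw [principalMinor, principalMinor, ← det_submatrix_equiv_self e]
  congr 1
  ext a b
  exact (h a b).symm

end Matrix

theorem Finset.mem_insert_iff_swap_mem_insert {ι : Type*} [DecidableEq ι] {ρ : Finset ι}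
    {i k : ι} (hi : i ∉ ρ) (hk : k ∉ ρ) (a : ι) :
    a ∈ insert i ρ ↔ Equiv.swap i k a ∈ insert k ρ := by
  rcases eq_or_ne a i with rfl | hai
  · simp
  rcases eq_or_ne a k with rfl | hak
  · simp [hai, hai.symm, hi, hk]
  · simp [Equiv.swap_apply_of_ne_of_ne hai hak, hai, hak]

open Matrix

variable {ι : Type*} [Fintype ι] [DecidableEq ι]

theorem sdet_eq_principalMinor (W : Matrix ι ι ℝ) (θ : ℝ) (σ : Finset ι) (i : ι) :
    sdet W θ σ i = ((1 - W).updateCol i fun _ => θ).principalMinor (insert i σ) := by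
  rw [sdet, principalMinor]
  congr 1
  ext a b
  simp only [of_apply, submatrix_apply, updateCol_apply, Matrix.sub_apply, one_apply]

theorem sdet_eq_of_disjoint (W : Matrix ι ι ℝ) (θ : ℝ) {τ ρ : Finset ι} (hρ : Disjoint ρ τ)
    (hse : ∀ j ∉ τ, ∀ i ∈ τ, ∀ k ∈ τ, W i j = W k j) {i k : ι} (hi : i ∈ τ) (hk : k ∈ τ) :
    sdet W θ ρ i = sdet W θ ρ k := by
  have hiρ : i ∉ ρ := Finset.disjoint_right.mp hρ hi
  have hkρ : k ∉ ρ := Finset.disjoint_right.mp hρ hk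
  rw [sdet_eq_principalMinor, sdet_eq_principalMinor]
  refine principalMinor_congr_equiv
    ((Equiv.swap i k).subtypeEquiv (Finset.mem_insert_iff_swap_mem_insert hiρ hkρ)) _ _ ?_
  rintro ⟨a, ha⟩ ⟨b, hb⟩
  simp only [Equiv.subtypeEquiv_apply, updateCol_apply]
  rcases Finset.mem_insert.mp hb with rfl | hbρ
  · simp
  have hbτ : b ∉ τ := Finset.disjoint_left.mp hρ hbρ
  have hbi : b ≠ i := by rintro rfl; exact hbτ hi
  have hbk : b ≠ k := by rintro rfl; exact hbτ hk
  rw [Equiv.swap_apply_of_ne_of_ne hbi hbk, if_neg hbi, if_neg hbk]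
  rcases Finset.mem_insert.mp ha with rfl | haρ
  · simp [one_apply, hbi.symm, hbk.symm, hse b hbτ a hi k hk]
  · rw [Equiv.swap_apply_of_ne_of_ne (by rintro rfl; exact hiρ haρ) (by rintro rfl; exact hkρ haρ)]

theorem mul_sdet_eq_sdet_sdiff_mul_sdet_inter (W : Matrix ι ι ℝ) (θ : ℝ) {τ : Finset ι}
    (hse : ∀ j ∉ τ, ∀ i ∈ τ, ∀ k ∈ τ, W i j = W k j) (σ : Finset ι) {i : ι} (hi : i ∈ τ) :
    θ * sdet W θ σ i = sdet W θ (σ \ τ) i * sdet W θ (σ ∩ τ) i := by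
  set K := (1 - W).updateCol i fun _ => θ with hK
  have hcol : ∀ a, K a i = K i i := by simp [K]
  have hrow : ∀ a ∈ τ, ∀ b ∉ τ, K a b = K i b := by
    intro a ha b hb
    have hab : a ≠ b := by rintro rfl; exact hb ha
    have hib : i ≠ b := by rintro rfl; exact hb hi
    simp [K, hib.symm, one_apply, hab, hib, hse b hb a ha i hi]
  have hσ := principalMinor_insert_eq_mul K σ τ hi hcol hrow
  have hστ := principalMinor_insert_eq_mul K (σ ∩ τ) τ hi hcol hrow
  rw [Finset.sdiff_eq_empty_iff_subset.mpr Finset.inter_subset_right, insert_empty_eq,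
    principalMinor_singleton, Finset.inter_assoc, Finset.inter_self, hcol i] at hστ
  rw [sdet_eq_principalMinor, sdet_eq_principalMinor, sdet_eq_principalMinor, ← hK, hσ, hστ,
    show K i i = θ by simp [K]]
  ring

/-- Factorization of Cramer determinants over a simply-embedded subset: if τ is
simply-embedded in the TLN (W, θ) with uniform input θ > 0, and ω = [n]\τ, then
for every σ ⊆ [n] and i ∈ τ, s_i^σ = (1/θ)·s_i^{σ∩ω}·s_i^{σ∩τ}; moreover
s_i^{σ∩ω} has the same value for all i ∈ τ. -/
theorem simply_embedded_sdet_factorization (n : ℕ)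
    (W : Matrix (Fin n) (Fin n) ℝ) (θ : ℝ) (hθ : 0 < θ)
    (τ : Finset (Fin n))
    (hse : ∀ j ∉ τ, ∀ i ∈ τ, ∀ k ∈ τ, W i j = W k j)
    (σ : Finset (Fin n)) :
    (∀ i ∈ τ, sdet W θ σ i = (1 / θ) * sdet W θ (σ \ τ) i * sdet W θ (σ ∩ τ) i) ∧
    (∀ i ∈ τ, ∀ k ∈ τ, sdet W θ (σ \ τ) i = sdet W θ (σ \ τ) k) := by
  refine ⟨fun i hi => ?_, fun i hi k hk => sdet_eq_of_disjoint W θ Finset.sdiff_disjoint hse hi hk⟩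
  rw [mul_assoc, ← mul_sdet_eq_sdet_sdiff_mul_sdet_inter W θ hse σ hi, one_div,
    inv_mul_cancel_left₀ hθ.ne']
end

section
/- Let (W, θ) be a TLN with uniform input θ > 0 whose node set is partitioned into components τ_1, ..., τ_N, each simply-embedded in (W, θ). For σ ⊆ [n] write σ_ℓ = σ ∩ τ_ℓ. Then for any ℓ with σ_ℓ ≠ ∅ and any i, j ∈ τ_ℓ: sgn s_i^σ = sgn s_j^σ if and only if sgn s_i^{σ_ℓ} = sgn s_j^{σ_ℓ}, provided the relevant Cramer determinants are nonzero (nondegeneracy). -/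
/-! Let `i ∈ τ`. In the Cramer matrix of `s_i^σ`, every row indexed by `σ ∩ τ \ {i}` agrees with
row `i` outside the columns `σ ∩ τ \ {i}`: column `i` is constantly `θ`, and on a column `j ∉ τ`
simple embedding gives `W_{aj} = W_{ij}`. Subtracting row `i` from those rows makes the matrix
block triangular, so `s_i^σ = s_i^{σ \ τ} · D` with `D` depending only on `σ ∩ τ` and `i`; the same
reduction gives `s_i^{σ ∩ τ} = θ D`, hence `θ s_i^σ = s_i^{σ ∩ τ} s_i^{σ \ τ}`. Swapping `i` and `j`
shows that `s_i^{σ \ τ} = s_j^{σ \ τ}`, because the rows of `τ` agree on the columns `σ \ τ`. So, as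
`θ > 0`, the signs of `s_i^σ` and `s_i^{σ ∩ τ}` differ by a sign common to all `i ∈ τ`. -/

namespace Matrix

variable {κ ι R : Type*} [CommRing R]

theorem det_eq_det_toSquareBlockProp_mul_det_sub_row [Fintype κ] [DecidableEq κ]
    (M : Matrix κ κ R) (p : κ → Prop) [DecidablePred p] {i₀ : κ} (hi₀ : p i₀)
    (h : ∀ a b, ¬ p a → p b → M a b = M i₀ b) :
    M.det = (toSquareBlockProp M p).det *
      (toSquareBlockProp (of fun a b => M a b - M i₀ b) fun a => ¬ p a).det := by
  set u : κ → R := fun a => if p a then 0 else -1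
  -- `L * M` subtracts row `i₀` from every row outside `p`.
  set L : Matrix κ κ R := 1 + replicateCol Unit u * replicateRow Unit (Pi.single i₀ (1 : R))
  have hL : L.det = 1 := by
    rw [det_one_add_replicateCol_mul_replicateRow]
    simp [u, hi₀]
  have hLM : ∀ a b, (L * M) a b = M a b + u a * M i₀ b := by
    intro a b
    simp [L, add_mul, mul_apply, one_apply, Finset.sum_add_distrib, Pi.single_apply]
  rw [← one_mul M.det, ← hL, ← det_mul, twoBlockTriangular_det _ p]
  · congr 2 <;> ext a b <;> simp [toSquareBlockProp, hLM, u, a.2, sub_eq_add_neg]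
  · intro a ha b hb
    simp [hLM, u, ha, h a b ha hb]

theorem det_toSquareBlockProp_submatrix_coe [DecidableEq ι] (A : Matrix ι ι R) (s t : Finset ι)
    (q : ι → Prop) [DecidablePred q] (h : ∀ x, x ∈ t ↔ x ∈ s ∧ q x) :
    (toSquareBlockProp (A.submatrix ((↑) : s → ι) (↑)) fun a => q a).det =
      (A.submatrix ((↑) : t → ι) (↑)).det := by
  rw [← det_submatrix_equiv_self ((Equiv.subtypeSubtypeEquivSubtypeInter (· ∈ s) q).trans
    (Equiv.subtypeEquivRight fun x => (h x).symm))]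
  rfl

theorem det_submatrix_eq_det_sdiff_mul_det_sub_row [DecidableEq ι] (A : Matrix ι ι R)
    {s u : Finset ι} {i : ι} (hi : i ∈ s) (hiu : i ∉ u)
    (h : ∀ a ∈ u, ∀ b ∉ u, A a b = A i b) :
    (A.submatrix ((↑) : s → ι) (↑)).det = (A.submatrix ((↑) : ↥(s \ u) → ι) (↑)).det *
      ((of fun a b => A a b - A i b).submatrix ((↑) : ↥(s ∩ u) → ι) (↑)).det := by
  rw [det_eq_det_toSquareBlockProp_mul_det_sub_row (A.submatrix ((↑) : s → ι) (↑))
      (fun a => (a : ι) ∉ u) (i₀ := ⟨i, hi⟩) hiu fun a b ha hb => h a (not_not.mp ha) b hb,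
    det_toSquareBlockProp_submatrix_coe A s (s \ u) (· ∉ u) fun _ => Finset.mem_sdiff]
  congr 1
  exact det_toSquareBlockProp_submatrix_coe (of fun a b => A a b - A i b) s (s ∩ u) (¬ · ∉ u)
    fun _ => by rw [Finset.mem_inter, not_not]

end Matrix

theorem Real.sign_mul (x y : ℝ) : Real.sign (x * y) = Real.sign x * Real.sign y := by
  rcases lt_trichotomy x 0 with hx | rfl | hx <;> rcases lt_trichotomy y 0 with hy | rfl | hy <;>
    simp [Real.sign_of_neg, Real.sign_of_pos, mul_pos_of_neg_of_neg, mul_neg_of_neg_of_pos,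
      mul_neg_of_pos_of_neg, *]

def SimplyEmbedded {ι α : Type*} (W : Matrix ι ι α) (t : Finset ι) : Prop :=
  ∀ j ∉ t, ∀ i ∈ t, ∀ k ∈ t, W i j = W k j

section

open Finset Matrix

variable {ι : Type*} [Fintype ι] [DecidableEq ι] {W : Matrix ι ι ℝ} {θ : ℝ} {t : Finset ι}

theorem sdet_eq_det_submatrix (W : Matrix ι ι ℝ) (θ : ℝ) (σ : Finset ι) (i : ι) :
    sdet W θ σ i =
      (((1 - W).updateCol i fun _ => θ).submatrix ((↑) : ↥(insert i σ) → ι) (↑)).det := by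
  unfold sdet
  congr 1
  ext a b
  simp [updateCol_apply, one_apply]

theorem SimplyEmbedded.mul_sdet_eq (ht : SimplyEmbedded W t) {i : ι} (hi : i ∈ t)
    (σ : Finset ι) : θ * sdet W θ σ i = sdet W θ (σ ∩ t) i * sdet W θ (σ \ t) i := by
  set A := (1 - W).updateCol i fun _ => θ
  have hrow : ∀ a ∈ t.erase i, ∀ b ∉ t.erase i, A a b = A i b := by
    intro a ha b hb
    obtain ⟨hai, hat⟩ := mem_erase.mp ha
    by_cases hbi : b = i
    · simp [A, hbi]
    · have hbt : b ∉ t := fun hbt => hb (mem_erase.mpr ⟨hbi, hbt⟩)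
      have hab : a ≠ b := by rintro rfl; exact hbt hat
      simp [A, hbi, hab, Ne.symm hbi, ht b hbt a hat i hi]
  have hσ := det_submatrix_eq_det_sdiff_mul_det_sub_row A (mem_insert_self i σ)
    (notMem_erase i t) hrow
  have hσt := det_submatrix_eq_det_sdiff_mul_det_sub_row A (mem_insert_self i (σ ∩ t))
    (notMem_erase i t) hrow
  have hsdiff : insert i σ \ t.erase i = insert i (σ \ t) := by ext x; by_cases x = i <;> simp_all
  have hsingleton : insert i (σ ∩ t) \ t.erase i = {i} := by ext x; by_cases x = i <;> simp_all
  have hinter : insert i (σ ∩ t) ∩ t.erase i = insert i σ ∩ t.erase i := by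
    ext x; by_cases x = i <;> simp_all
  rw [hsingleton, hinter, det_unique (A.submatrix ((↑) : ↥({i} : Finset ι) → ι) (↑))] at hσt
  rw [hsdiff] at hσ
  rw [sdet_eq_det_submatrix, sdet_eq_det_submatrix, sdet_eq_det_submatrix, hσ, hσt]
  simp [A]
  ring

theorem SimplyEmbedded.sdet_eq_of_disjoint (ht : SimplyEmbedded W t) {r : Finset ι}
    (hr : Disjoint r t) {i j : ι} (hi : i ∈ t) (hj : j ∈ t) : sdet W θ r i = sdet W θ r j := by
  have hir : i ∉ r := disjoint_right.mp hr hi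
  have hjr : j ∉ r := disjoint_right.mp hr hj
  have hmem : ∀ x, x ∈ insert i r ↔ Equiv.swap i j x ∈ insert j r := by
    intro x
    rw [Equiv.swap_apply_def]
    split_ifs <;> simp_all [eq_comm]
  rw [sdet_eq_det_submatrix, sdet_eq_det_submatrix,
    ← det_submatrix_equiv_self (Equiv.subtypeEquiv (Equiv.swap i j) hmem)]
  congr 1
  ext ⟨a, ha⟩ ⟨b, hb⟩
  simp only [submatrix_apply, Equiv.subtypeEquiv_apply, updateCol_apply,
    Equiv.swap_apply_eq_iff, Equiv.swap_apply_right]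
  split_ifs with hbi
  · rfl
  have hbt : b ∉ t := disjoint_left.mp hr ((mem_insert.mp hb).resolve_left hbi)
  have hbj : b ≠ j := by rintro rfl; exact hbt hj
  rw [Equiv.swap_apply_of_ne_of_ne hbi hbj]
  rcases mem_insert.mp ha with rfl | har
  · simp [Ne.symm hbi, Ne.symm hbj, ht b hbt a hi j hj]
  · have hat : a ∉ t := disjoint_left.mp hr har
    rw [Equiv.swap_apply_of_ne_of_ne (by rintro rfl; exact hat hi) (by rintro rfl; exact hat hj)]

theorem SimplyEmbedded.sign_sdet_eq_iff (ht : SimplyEmbedded W t) (hθ : 0 < θ) {σ : Finset ι}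
    {i j : ι} (hi : i ∈ t) (hj : j ∈ t) (hne : sdet W θ (σ \ t) i ≠ 0) :
    Real.sign (sdet W θ σ i) = Real.sign (sdet W θ σ j) ↔
      Real.sign (sdet W θ (σ ∩ t) i) = Real.sign (sdet W θ (σ ∩ t) j) := by
  have hsign : ∀ k ∈ t, Real.sign (sdet W θ σ k) =
      Real.sign (sdet W θ (σ ∩ t) k) * Real.sign (sdet W θ (σ \ t) i) := by
    intro k hk
    rw [ht.sdet_eq_of_disjoint sdiff_disjoint hi hk, ← Real.sign_mul, ← ht.mul_sdet_eq hk,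
      Real.sign_mul, Real.sign_of_pos hθ, one_mul]
  rw [hsign i hi, hsign j hj]
  exact mul_left_inj' (mt Real.sign_eq_zero_iff.mp hne)

end

theorem simply_embedded_sign_inheritance_general (n N : ℕ)
    (W : Matrix (Fin n) (Fin n) ℝ) (θ : ℝ) (hθ : 0 < θ)
    (τ : Fin N → Finset (Fin n))
    (hse : ∀ ℓ, ∀ j ∉ τ ℓ, ∀ i ∈ τ ℓ, ∀ k ∈ τ ℓ, W i j = W k j)
    (hnd : ∀ (ρ : Finset (Fin n)) (i : Fin n), sdet W θ ρ i ≠ 0)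
    (σ : Finset (Fin n)) (ℓ : Fin N) :
    ∀ i ∈ τ ℓ, ∀ j ∈ τ ℓ,
      (Real.sign (sdet W θ σ i) = Real.sign (sdet W θ σ j) ↔
        Real.sign (sdet W θ (σ ∩ τ ℓ) i) = Real.sign (sdet W θ (σ ∩ τ ℓ) j)) :=
  fun _ hi _ hj => SimplyEmbedded.sign_sdet_eq_iff (hse ℓ) hθ hi hj (hnd _ _)

/-- Sign inheritance for simply-embedded partitions: if the nodes of a nondegenerate
TLN (W, θ) with uniform input θ > 0 are partitioned into components τ_1,...,τ_N each
simply-embedded in (W, θ), then for any σ ⊆ [n], any component ℓ with σ ∩ τ_ℓ ≠ ∅,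
and any i, j ∈ τ_ℓ: sgn s_i^σ = sgn s_j^σ ⟺ sgn s_i^{σ∩τ_ℓ} = sgn s_j^{σ∩τ_ℓ}. -/
theorem simply_embedded_sign_inheritance (n N : ℕ)
    (W : Matrix (Fin n) (Fin n) ℝ) (θ : ℝ) (hθ : 0 < θ)
    (τ : Fin N → Finset (Fin n))
    (hdisj : ∀ ℓ ℓ', ℓ ≠ ℓ' → Disjoint (τ ℓ) (τ ℓ'))
    (hcover : ∀ i : Fin n, ∃ ℓ, i ∈ τ ℓ)
    (hse : ∀ ℓ, ∀ j ∉ τ ℓ, ∀ i ∈ τ ℓ, ∀ k ∈ τ ℓ, W i j = W k j)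
    (hnd : ∀ (ρ : Finset (Fin n)) (i : Fin n), sdet W θ ρ i ≠ 0)
    (σ : Finset (Fin n)) (ℓ : Fin N) (hℓ : (σ ∩ τ ℓ).Nonempty) :
    ∀ i ∈ τ ℓ, ∀ j ∈ τ ℓ,
      (Real.sign (sdet W θ σ i) = Real.sign (sdet W θ σ j) ↔
        Real.sign (sdet W θ (σ ∩ τ ℓ) i) = Real.sign (sdet W θ (σ ∩ τ ℓ) j)) :=
  simply_embedded_sign_inheritance_general n N W θ hθ τ hse hnd σ ℓ
end

section
/- Let (W, θ) be a nondegenerate TLN with uniform input θ > 0 and a partition of nodes τ_1,...,τ_N where each τ_ℓ is simply-embedded. Characterize fixed point supports via sign conditions: σ ∈ FP(W, θ) iff sgn s_i^σ = sgn s_j^σ = -sgn s_k^σ for all i, j ∈ σ and k ∉ σ. Then every σ ∈ FP(W, θ) satisfies σ ∩ τ_ℓ ∈ FP(W_{τ_ℓ}, θ) ∪ {∅} for all ℓ ∈ [N]; i.e., every global fixed point support is a union of component fixed point supports, at most one per component. -/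
/-- Sign-conditions characterization of fixed point supports: a nonempty σ is in
FP(W, θ) iff all s_i^σ for i ∈ σ share one sign and every s_k^σ for k ∉ σ has the
opposite sign. -/
def signFP {ι : Type*} [Fintype ι] [DecidableEq ι]
    (W : Matrix ι ι ℝ) (θ : ℝ) (σ : Finset ι) : Prop :=
  σ.Nonempty ∧
    (∀ i ∈ σ, ∀ j ∈ σ, Real.sign (sdet W θ σ i) = Real.sign (sdet W θ σ j)) ∧
    (∀ i ∈ σ, ∀ k, k ∉ σ → Real.sign (sdet W θ σ k) = - Real.sign (sdet W θ σ i))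

namespace Matrix

theorem det_add_vecMulVec_col_self {m R : Type*} [Fintype m] [DecidableEq m] [CommRing R]
    (M : Matrix m m R) (c : m) (v : m → R) (hv : v c = 0) :
    (M + vecMulVec (M.col c) v).det = M.det := by
  have hE : (1 + vecMulVec (Pi.single c 1) v).det = 1 := by
    rw [vecMulVec_eq Unit, det_one_add_replicateCol_mul_replicateRow, dotProduct_single, hv,
      mul_one, add_zero]
  calc (M + vecMulVec (M.col c) v).det = (M * (1 + vecMulVec (Pi.single c 1) v)).det := by
        rw [mul_add, mul_one, mul_vecMulVec, mulVec_single_one]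
    _ = M.det := by rw [det_mul, hE, mul_one]

end Matrix

section
open Matrix Finset
variable {ι : Type*} [DecidableEq ι]

/- Adding `r b / θ` times the constant column `θ𝟙` (column `i`) to every column `b ∉ T`. -/
theorem sdet_eq_det_add_row_outside [Fintype ι] {θ : ℝ} (hθ : θ ≠ 0) (W : Matrix ι ι ℝ)
    (T σ : Finset ι) (r : ι → ℝ) (i : {x // x ∈ T}) :
    sdet W θ σ i = det (of fun a b : {x // x ∈ insert (i : ι) σ} =>
      if (b : ι) ∈ T then (if (b : ι) = i then θ else (if (a : ι) = b then 1 else 0) - W a b)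
      else (if (a : ι) = b then 1 else 0) - W a b + r b) := by
  set M : Matrix {x // x ∈ insert (i : ι) σ} {x // x ∈ insert (i : ι) σ} ℝ :=
    of fun a b => if (b : ι) = i then θ else (if (a : ι) = b then 1 else 0) - W a b
  set c : {x // x ∈ insert (i : ι) σ} := ⟨i, mem_insert_self _ _⟩
  set v : {x // x ∈ insert (i : ι) σ} → ℝ := fun b => if (b : ι) ∈ T then 0 else r b / θ
  rw [show sdet W θ σ i = M.det from rfl, ← M.det_add_vecMulVec_col_self c v (if_pos i.2)]
  congr 1
  ext a b
  by_cases hb : (b : ι) ∈ T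
  · simp [M, v, hb, vecMulVec_apply]
  · have hbi : (b : ι) ≠ i := fun h => hb (by rw [h]; exact i.2)
    simp [M, v, c, hb, hbi, vecMulVec_apply, mul_div_cancel₀ _ hθ]

theorem det_add_row_outside_eq_sdet_submatrix_mul {W : Matrix ι ι ℝ} {T : Finset ι}
    {r : ι → ℝ} (hr : ∀ a ∈ T, ∀ b ∉ T, W a b = r b) (θ : ℝ) (σ : Finset ι) (i : {x // x ∈ T}) :
    det (of fun a b : {x // x ∈ insert (i : ι) σ} =>
      if (b : ι) ∈ T then (if (b : ι) = i then θ else (if (a : ι) = b then 1 else 0) - W a b)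
      else (if (a : ι) = b then 1 else 0) - W a b + r b) =
    sdet (W.submatrix Subtype.val Subtype.val) θ (σ.subtype (· ∈ T)) i *
      ((1 - W + of fun _ => r).submatrix (Subtype.val : ↥(σ \ T) → ι) Subtype.val).det := by
  rw [twoBlockTriangular_det' _ (fun a : {x // x ∈ insert (i : ι) σ} => (a : ι) ∈ T)]
  swap
  · intro a ha b hb
    have hab : a ≠ b := fun h => hb (h ▸ ha)
    simp [hb, hab, hr a ha b hb]
  congr 1
  · have hmem : ∀ y : {x // x ∈ T},
        y ∈ insert i (σ.subtype (· ∈ T)) ↔ (y : ι) ∈ insert (i : ι) σ := by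
      intro y
      rw [mem_insert, mem_insert, mem_subtype, Subtype.ext_iff]
    let e : {y // y ∈ insert i (σ.subtype (· ∈ T))} ≃
        {a : {x // x ∈ insert (i : ι) σ} // (a : ι) ∈ T} :=
      { toFun := fun y => ⟨⟨y.1, (hmem y.1).1 y.2⟩, y.1.2⟩
        invFun := fun a => ⟨⟨a.1, a.2⟩, (hmem _).2 a.1.2⟩
        left_inv := fun _ => rfl
        right_inv := fun _ => rfl }
    rw [← det_submatrix_equiv_self e]
    congr 1
    ext a b
    simp only [e, toSquareBlockProp_def, submatrix_apply, Equiv.coe_fn_mk, of_apply,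
      if_pos b.1.2, Subtype.ext_iff]
  · let e : ↥(σ \ T) ≃ {a : {x // x ∈ insert (i : ι) σ} // (a : ι) ∉ T} :=
      { toFun := fun x => ⟨⟨x, mem_insert_of_mem (mem_sdiff.1 x.2).1⟩, (mem_sdiff.1 x.2).2⟩
        invFun := fun a => ⟨a.1, mem_sdiff.2
          ⟨(mem_insert.1 a.1.2).resolve_left fun h => a.2 (by rw [h]; exact i.2), a.2⟩⟩
        left_inv := fun _ => rfl
        right_inv := fun _ => rfl }
    rw [← det_submatrix_equiv_self e]
    congr 1
    ext a b
    simp only [e, toSquareBlockProp_def, submatrix_apply, Equiv.coe_fn_mk, of_apply,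
      if_neg (mem_sdiff.1 b.2).2, Matrix.add_apply, Matrix.sub_apply, Matrix.one_apply]

theorem signFP_subtype_of_sdet_eq_mul [Fintype ι] {W : Matrix ι ι ℝ} {θ : ℝ} {T σ : Finset ι}
    {K : ℝ} (hK : K ≠ 0) (hfac : ∀ i : {x // x ∈ T},
      sdet W θ σ i = sdet (W.submatrix Subtype.val Subtype.val) θ (σ.subtype (· ∈ T)) i * K)
    (hσ : signFP W θ σ) (hσT : (σ ∩ T).Nonempty) :
    signFP (W.submatrix Subtype.val Subtype.val) θ (σ.subtype (· ∈ T)) := by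
  have hsign : ∀ i : {x // x ∈ T}, Real.sign (sdet W θ σ i) =
      Real.sign (sdet (W.submatrix Subtype.val Subtype.val) θ (σ.subtype (· ∈ T)) i) *
        Real.sign K := fun i => by rw [hfac, Real.sign_mul]
  have hsignK : Real.sign K ≠ 0 := mt Real.sign_eq_zero_iff.1 hK
  obtain ⟨i₀, hi₀⟩ := hσT
  rw [mem_inter] at hi₀
  refine ⟨⟨⟨i₀, hi₀.2⟩, mem_subtype.2 hi₀.1⟩, fun i hi j hj => ?_, fun i hi k hk => ?_⟩
  · have h := hσ.2.1 i (mem_subtype.1 hi) j (mem_subtype.1 hj)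
    rw [hsign, hsign] at h
    exact mul_right_cancel₀ hsignK h
  · have h := hσ.2.2 i (mem_subtype.1 hi) k (mt mem_subtype.2 hk)
    rw [hsign, hsign, ← neg_mul] at h
    exact mul_right_cancel₀ hsignK h

end

theorem simply_embedded_menu_general (n N : ℕ)
    (W : Matrix (Fin n) (Fin n) ℝ) (θ : ℝ) (hθ : 0 < θ)
    (τ : Fin N → Finset (Fin n))
    (hse : ∀ ℓ, ∀ j ∉ τ ℓ, ∀ i ∈ τ ℓ, ∀ k ∈ τ ℓ, W i j = W k j)
    (hnd : ∀ (ρ : Finset (Fin n)) (i : Fin n), sdet W θ ρ i ≠ 0)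
    (σ : Finset (Fin n)) (hσ : signFP W θ σ) (ℓ : Fin N) :
    σ ∩ τ ℓ = ∅ ∨
      signFP (W.submatrix (Subtype.val : {x // x ∈ τ ℓ} → Fin n) Subtype.val) θ
        (σ.subtype (· ∈ τ ℓ)) := by
  rcases (σ ∩ τ ℓ).eq_empty_or_nonempty with hempty | ⟨i₀, hi₀⟩
  · exact Or.inl hempty
  have hi₀ℓ : i₀ ∈ τ ℓ := (Finset.mem_inter.1 hi₀).2
  have hfac : ∀ i : {x // x ∈ τ ℓ}, sdet W θ σ i = _ * _ := fun i => by
    rw [sdet_eq_det_add_row_outside hθ.ne' W (τ ℓ) σ (W i₀) i,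
      det_add_row_outside_eq_sdet_submatrix_mul (fun a ha b hb => hse ℓ b hb a ha i₀ hi₀ℓ)]
  have hK := hnd σ i₀
  rw [hfac ⟨i₀, hi₀ℓ⟩] at hK
  exact Or.inr (signFP_subtype_of_sdet_eq_mul (right_ne_zero_of_mul hK) hfac hσ ⟨i₀, hi₀⟩)

/-- Menu theorem for simply-embedded partitions (TLN version): if the nodes of a
nondegenerate TLN (W, θ), θ > 0 uniform, are partitioned into simply-embedded
components τ_1,...,τ_N, then every fixed point support σ ∈ FP(W, θ) satisfies
σ ∩ τ_ℓ ∈ FP(W_{τ_ℓ}, θ) ∪ {∅} for every component ℓ. -/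
theorem simply_embedded_menu (n N : ℕ)
    (W : Matrix (Fin n) (Fin n) ℝ) (θ : ℝ) (hθ : 0 < θ)
    (τ : Fin N → Finset (Fin n))
    (hdisj : ∀ ℓ ℓ', ℓ ≠ ℓ' → Disjoint (τ ℓ) (τ ℓ'))
    (hcover : ∀ i : Fin n, ∃ ℓ, i ∈ τ ℓ)
    (hse : ∀ ℓ, ∀ j ∉ τ ℓ, ∀ i ∈ τ ℓ, ∀ k ∈ τ ℓ, W i j = W k j)
    (hnd : ∀ (ρ : Finset (Fin n)) (i : Fin n), sdet W θ ρ i ≠ 0)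
    (σ : Finset (Fin n)) (hσ : signFP W θ σ) (ℓ : Fin N) :
    σ ∩ τ ℓ = ∅ ∨
      signFP (W.submatrix (Subtype.val : {x // x ∈ τ ℓ} → Fin n) Subtype.val) θ
        (σ.subtype (· ∈ τ ℓ)) :=
  simply_embedded_menu_general n N W θ hθ τ hse hnd σ hσ ℓ
end

section
/- Let G be a graph on n nodes defining a CTLN with connectivity W given by W_{ii}=0, W_{ij} = -1+ε if j→i in G and W_{ij} = -1-δ otherwise, and uniform input θ. Let τ ⊆ [n] be simply-embedded in G (every node outside τ either sends edges to all of τ or to none of τ). Then for any distinct i, j ∈ τ and any k ∉ τ, the determinant Δ_k^{ij}(τ) := det(v_1,...,v_{k-1}, h_i, v_{k+1},...,v_n, h_j) vanishes, where v_ℓ = h_ℓ for ℓ ∈ τ\{i,j}, v_ℓ = e_ℓ otherwise, h_m ∈ ℝ^{n+1} is the m-th row of the matrix [-I+W | θ𝟙], and e_ℓ is the ℓ-th standard basis vector of ℝ^{n+1}. -/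
/-- The m-th row h_m = (W_{m1},...,-1 (in position m),...,W_{mn}, θ) of the matrix
[-I+W | θ𝟙], as a vector in ℝ^{n+1}. -/
def hrow {n : ℕ} (W : Matrix (Fin n) (Fin n) ℝ) (θ : ℝ) (m : Fin n) :
    Fin (n + 1) → ℝ :=
  fun c => if hc : (c : ℕ) < n then
      (if m = ⟨(c : ℕ), hc⟩ then (-1 : ℝ) else W m ⟨(c : ℕ), hc⟩)
    else θ

/-- A matrix whose column `a` is a scalar multiple of its column `b` (`a ≠ b`)
has zero determinant. -/
lemma det_eq_zero_of_column_smul {N : Type*} [DecidableEq N] [Fintype N]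
    (M : Matrix N N ℝ) (a b : N) (hab : a ≠ b) (s : ℝ)
    (h : ∀ r, M r a = s * M r b) : M.det = 0 := by
  have hM : M = M.updateCol a (s • fun r => M r b) := by
    ext r c
    by_cases hc : c = a
    · subst hc; simp [Matrix.updateCol_self, h r]
    · simp [Matrix.updateCol_ne hc]
  rw [hM, Matrix.det_updateCol_smul]
  rw [Matrix.det_updateCol_eq_zero (M := M) (i := b) (j := a) (Ne.symm hab)]
  ring

/-- Vanishing of the chirotope determinants Δ_k^{ij}(τ) for a CTLN with a
simply-embedded subset τ: for distinct i, j ∈ τ and k ∉ τ, the determinant of the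
(n+1)×(n+1) matrix with rows v_1,...,v_{k-1}, h_i, v_{k+1},...,v_n, h_j vanishes,
where v_ℓ = h_ℓ for ℓ ∈ τ\{i,j} and v_ℓ = e_ℓ otherwise. -/
theorem ctln_simply_embedded_delta_vanishes (n : ℕ)
    (ε δ θ : ℝ) (hε : 0 < ε) (hδ : 0 < δ) (hθ : 0 < θ)
    (edge : Fin n → Fin n → Bool)
    (W : Matrix (Fin n) (Fin n) ℝ)
    (hW : ∀ i j, W i j = if i = j then 0 else if edge j i then -1 + ε else -1 - δ)
    (τ : Finset (Fin n))
    (hse : ∀ k ∉ τ, ∀ i ∈ τ, ∀ i' ∈ τ, W i k = W i' k)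
    (i j : Fin n) (hi : i ∈ τ) (hj : j ∈ τ) (hij : i ≠ j)
    (k : Fin n) (hk : k ∉ τ) :
    Matrix.det (Matrix.of (fun (r c : Fin (n + 1)) =>
      if hr : (r : ℕ) < n then
        (if (⟨(r : ℕ), hr⟩ : Fin n) = k then hrow W θ i c
         else if (⟨(r : ℕ), hr⟩ : Fin n) ∈ τ ∧ (⟨(r : ℕ), hr⟩ : Fin n) ≠ i ∧
              (⟨(r : ℕ), hr⟩ : Fin n) ≠ j
           then hrow W θ ⟨(r : ℕ), hr⟩ c
           else if c = Fin.castSucc ⟨(r : ℕ), hr⟩ then (1 : ℝ) else 0)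
      else hrow W θ j c)) = 0 := by
  have hθ' : θ ≠ 0 := ne_of_gt hθ
  have hklt : (Fin.castSucc k : Fin (n+1)).1 < n := k.isLt
  have hkc : (⟨((Fin.castSucc k : Fin (n+1)) : ℕ), hklt⟩ : Fin n) = k := by
    simp [Fin.ext_iff]
  have hnlt : ¬ ((Fin.last n : Fin (n+1)) : ℕ) < n := by simp
  -- W m k is constant for m ∈ τ
  have hWk : ∀ m ∈ τ, W m k = W i k := fun m hm => hse k hk m hm i hi
  apply det_eq_zero_of_column_smul _ (Fin.castSucc k) (Fin.last n)
    (by simp [Fin.ext_iff, Nat.ne_of_lt k.isLt]) (W i k / θ)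
  intro r
  by_cases hr : (r : ℕ) < n
  · by_cases h1 : (⟨(r : ℕ), hr⟩ : Fin n) = k
    · -- row h_i
      simp only [Matrix.of_apply, dif_pos hr, if_pos h1, hrow, dif_pos hklt,
        dif_neg hnlt, hkc]
      have : i ≠ k := fun h => hk (h ▸ hi)
      rw [if_neg this]
      field_simp
    · by_cases h2 : (⟨(r : ℕ), hr⟩ : Fin n) ∈ τ ∧ (⟨(r : ℕ), hr⟩ : Fin n) ≠ i ∧
          (⟨(r : ℕ), hr⟩ : Fin n) ≠ j
      · -- row h_m, m ∈ τ \ {i,j}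
        simp only [Matrix.of_apply, dif_pos hr, if_neg h1, if_pos h2, hrow,
          dif_pos hklt, dif_neg hnlt, hkc]
        rw [hWk _ h2.1]
        field_simp
      · -- standard basis row
        simp only [Matrix.of_apply, dif_pos hr, if_neg h1, if_neg h2]
        have hrk : (r : ℕ) ≠ (k : ℕ) := fun h => h1 (Fin.ext h)
        rw [if_neg, if_neg]
        · ring
        · simp only [Fin.ext_iff, Fin.val_last, Fin.coe_castSucc]
          omega
        · simp only [Fin.ext_iff, Fin.coe_castSucc]
          omega
  · -- last row h_j
    simp only [Matrix.of_apply, dif_neg hr, hrow, dif_pos hklt, dif_neg hnlt, hkc]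
    have : j ≠ k := fun h => hk (h ▸ hj)
    rw [if_neg this, hWk j hj]
    field_simp
end

section
/- Let (W, b) be a TLN and suppose τ ⊆ [n] admits distinct p, q ∈ [n]\τ with τ simply-embedded in τ∪{p,q}, i.e., W_{ip} = W_{jp} and W_{iq} = W_{jq} for all i,j ∈ τ. Let σ = {i_1,...,i_k} ⊆ τ, and consider the (n+1)×(n+1) matrix whose rows are h_{i_1},...,h_{i_k} together with n+1-k distinct standard basis vectors e_s of ℝ^{n+1}, where neither e_p nor e_q appears among them. Then this determinant is zero. -/
/-- The m-th row h_m = (W_{m1},...,-1 (in position m),...,W_{mn}, b_m) of the matrix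
[-I+W | b], as a vector in ℝ^{n+1}. -/
def hrowb {n : ℕ} (W : Matrix (Fin n) (Fin n) ℝ) (b : Fin n → ℝ) (m : Fin n) :
    Fin (n + 1) → ℝ :=
  fun c => if hc : (c : ℕ) < n then
      (if m = ⟨(c : ℕ), hc⟩ then (-1 : ℝ) else W m ⟨(c : ℕ), hc⟩)
    else b m

/-- If column `j` is `c` times column `i` (with `i ≠ j`), the determinant vanishes. -/
lemma det_col_smul_aux {m : Type*} [DecidableEq m] [Fintype m]
    (M : Matrix m m ℝ) (i j : m) (hij : i ≠ j) (c : ℝ)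
    (h : ∀ k, M k j = c * M k i) : M.det = 0 := by
  have hM : M = (M.updateCol j (fun k => M k i)).updateCol j
      (c • fun k => M k i) := by
    ext r s
    by_cases hs : s = j
    · subst hs; simp [Matrix.updateCol_apply, h]
    · simp [Matrix.updateCol_apply, hs]
  rw [hM, Matrix.det_updateCol_smul]
  have : ((M.updateCol j fun k => M k i).updateCol j fun k => M k i).det = 0 := by
    apply Matrix.det_zero_of_column_eq hij
    intro k
    simp [Matrix.updateCol_apply, hij]
  rw [this, mul_zero]

/-- `hrowb` evaluated at `castSucc c` for `m ≠ c` is just `W m c`. -/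
lemma hrowb_castSucc {n : ℕ} (W : Matrix (Fin n) (Fin n) ℝ) (b : Fin n → ℝ)
    (m c : Fin n) (hmc : m ≠ c) : hrowb W b m (Fin.castSucc c) = W m c := by
  have hc : ((Fin.castSucc c : Fin (n+1)) : ℕ) < n := by simp [c.isLt]
  have hfin : (⟨((Fin.castSucc c : Fin (n+1)) : ℕ), hc⟩ : Fin n) = c := by
    apply Fin.ext; simp
  rw [hrowb, dif_pos hc, hfin, if_neg hmc]

/-- Vanishing of chirotope determinants (two external nodes): suppose τ is
simply-embedded in τ∪{p,q} for distinct p, q ∉ τ (i.e. W_{ip} = W_{jp} and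
W_{iq} = W_{jq} for all i, j ∈ τ). Then any (n+1)×(n+1) determinant whose rows are
the h_i for i ∈ σ ⊆ τ together with distinct standard basis vectors of ℝ^{n+1}
not including e_p nor e_q is zero.  The row arrangement is encoded by an
equivalence g : Fin (n+1) ≃ σ ⊕ S, where S is the set of basis indices used. -/
theorem chirotope_vanishes_two_external (n : ℕ)
    (W : Matrix (Fin n) (Fin n) ℝ) (b : Fin n → ℝ)
    (τ : Finset (Fin n)) (p q : Fin n) (hp : p ∉ τ) (hq : q ∉ τ) (hpq : p ≠ q)
    (hse : ∀ i ∈ τ, ∀ j ∈ τ, W i p = W j p ∧ W i q = W j q)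
    (σ : Finset (Fin n)) (hστ : σ ⊆ τ)
    (S : Finset (Fin (n + 1)))
    (hpS : Fin.castSucc p ∉ S) (hqS : Fin.castSucc q ∉ S)
    (g : Fin (n + 1) ≃ ({x // x ∈ σ} ⊕ {s // s ∈ S})) :
    Matrix.det (Matrix.of (fun (r c : Fin (n + 1)) =>
      Sum.elim (fun i : {x // x ∈ σ} => hrowb W b (i : Fin n) c)
        (fun s : {s // s ∈ S} => if c = (s : Fin (n + 1)) then (1 : ℝ) else 0)
        (g r))) = 0 := by
  set M : Matrix (Fin (n+1)) (Fin (n+1)) ℝ := Matrix.of (fun (r c : Fin (n + 1)) =>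
      Sum.elim (fun i : {x // x ∈ σ} => hrowb W b (i : Fin n) c)
        (fun s : {s // s ∈ S} => if c = (s : Fin (n + 1)) then (1 : ℝ) else 0)
        (g r)) with hM
  -- entries in columns p, q
  have hMp : ∀ r, M r (Fin.castSucc p) =
      Sum.elim (fun i : {x // x ∈ σ} => W (i : Fin n) p) (fun _ => 0) (g r) := by
    intro r
    rcases hgr : g r with i | s
    · have hip : (i : Fin n) ≠ p := fun h => hp (h ▸ hστ i.2)
      simp [hM, hgr, hrowb_castSucc W b _ p hip]
    · have : Fin.castSucc p ≠ (s : Fin (n+1)) := fun h => hpS (h ▸ s.2)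
      simp [hM, hgr, this]
  have hMq : ∀ r, M r (Fin.castSucc q) =
      Sum.elim (fun i : {x // x ∈ σ} => W (i : Fin n) q) (fun _ => 0) (g r) := by
    intro r
    rcases hgr : g r with i | s
    · have hiq : (i : Fin n) ≠ q := fun h => hq (h ▸ hστ i.2)
      simp [hM, hgr, hrowb_castSucc W b _ q hiq]
    · have : Fin.castSucc q ≠ (s : Fin (n+1)) := fun h => hqS (h ▸ s.2)
      simp [hM, hgr, this]
  rcases σ.eq_empty_or_nonempty with hσe | ⟨i0, hi0⟩
  · -- σ empty: column p is zero
    apply Matrix.det_eq_zero_of_column_eq_zero (Fin.castSucc p)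
    intro r
    rw [hMp]
    rcases hgr : g r with i | s
    · exact absurd i.2 (by simp [hσe])
    · simp
  · set cp := W i0 p with hcp
    set cq := W i0 q with hcq
    have hcolp : ∀ i : {x // x ∈ σ}, W (i : Fin n) p = cp :=
      fun i => (hse _ (hστ i.2) _ (hστ hi0)).1
    have hcolq : ∀ i : {x // x ∈ σ}, W (i : Fin n) q = cq :=
      fun i => (hse _ (hστ i.2) _ (hστ hi0)).2
    by_cases hcp0 : cp = 0
    · apply Matrix.det_eq_zero_of_column_eq_zero (Fin.castSucc p)
      intro r
      rw [hMp]
      rcases g r with i | s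
      · simp [hcolp i, hcp0]
      · simp
    · apply det_col_smul_aux M (Fin.castSucc p) (Fin.castSucc q)
        (fun h => hpq (Fin.castSucc_injective n h)) (cq / cp)
      intro r
      rw [hMp, hMq]
      rcases g r with i | s
      · simp [hcolp i, hcolq i, div_mul_cancel₀ _ hcp0]
      · simp
end

section
/- Let (W, θ) be a nondegenerate TLN with uniform input θ > 0, with a partition τ_1,...,τ_N such that both every τ_ℓ and every complement [n]\τ_ℓ is simply-embedded (strongly simply-embedded: for each node j ∈ τ_ℓ, W_{ij} takes a common value γ_j for all i ∉ τ_ℓ). For σ ⊆ [n] with σ_ℓ = σ∩τ_ℓ and I = {ℓ : σ_ℓ ≠ ∅}, the Cramer determinants fully factor: for every i ∈ [n], s_i^σ = θ^{1−|I|} · Π_{ℓ∈I} s_i^{σ_ℓ}, and s_i^{σ_ℓ} takes the same value for all i ∈ [n]\τ_ℓ. -/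
open Matrix Finset Function

section DetOn

variable {ι R : Type*} [DecidableEq ι] [CommRing R]

def detOn (s : Finset ι) (f : ι → ι → R) : R :=
  (of fun a b : s => f a b).det

theorem detOn_empty (f : ι → ι → R) : detOn ∅ f = 1 :=
  det_isEmpty

theorem detOn_singleton (i : ι) (f : ι → ι → R) : detOn {i} f = f i i := by
  simp [detOn]

theorem detOn_congr {s t : Finset ι} {f g : ι → ι → R} (hst : s = t)
    (hfg : ∀ a ∈ s, ∀ b ∈ s, f a b = g a b) : detOn s f = detOn t g := by
  subst hst
  unfold detOn
  congr 1
  ext a b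
  exact hfg a a.2 b b.2

theorem detOn_sub_row {s : Finset ι} {k : ι} (hk : k ∈ s) (c : ι → R) (hc : c k = 0)
    (f : ι → ι → R) : detOn s (fun a b => f a b - c a * f k b) = detOn s f :=
  det_eq_of_forall_row_eq_smul_add_const (fun a : s => -c a) ⟨k, hk⟩ (by simpa using hc)
    fun a b => by simp [sub_eq_add_neg]

theorem detOn_union {s t : Finset ι} (hst : Disjoint s t) {f : ι → ι → R}
    (hf : ∀ a ∈ s, ∀ b ∈ t, f a b = 0) : detOn (s ∪ t) f = detOn s f * detOn t f := by
  unfold detOn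
  rw [← det_submatrix_equiv_self (Equiv.Finset.union s t hst), ← det_fromBlocks_zero₁₂
    (of fun a b : s => f a b) (of fun (a : t) (b : s) => f a b) (of fun a b : t => f a b)]
  congr 1
  ext (a | a) (b | b) <;> simp [hf]

end DetOn

section Cramer

variable {ι R : Type*} [DecidableEq ι] [CommRing R]

def reducedSdet (W : Matrix ι ι R) (i : ι) (σ : Finset ι) : R :=
  detOn (σ.erase i) fun a b => (1 - W) a b + W i b

theorem sdet_eq_detOn [Fintype ι] (W : Matrix ι ι ℝ) (θ : ℝ) (σ : Finset ι) (i : ι) :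
    sdet W θ σ i = detOn (insert i σ) fun a b => if b = i then θ else (1 - W) a b := by
  simp only [sdet, detOn, Matrix.sub_apply, one_apply]

theorem sdet_eq_mul_reducedSdet [Fintype ι] (W : Matrix ι ι ℝ) (θ : ℝ) (σ : Finset ι) (i : ι) :
    sdet W θ σ i = θ * reducedSdet W i σ := by
  have hsplit : insert i σ = σ.erase i ∪ {i} := by
    rw [union_comm, ← insert_eq, ← erase_insert_eq_erase, insert_erase (mem_insert_self i σ)]
  rw [sdet_eq_detOn, ← detOn_sub_row (mem_insert_self i σ) (fun a => if a = i then 0 else 1)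
    (if_pos rfl), hsplit, detOn_union (disjoint_singleton_right.mpr (notMem_erase i σ)),
    detOn_singleton, mul_comm]
  · congr 1
    · simp
    · refine detOn_congr rfl fun a ha b hb => ?_
      simp [ne_of_mem_erase ha, ne_of_mem_erase hb, (ne_of_mem_erase hb).symm, one_apply]
  · intro a ha b hb
    simp [mem_singleton.mp hb, ne_of_mem_erase ha]

variable (W : Matrix ι ι R)

theorem reducedSdet_empty (i : ι) : reducedSdet W i ∅ = 1 :=
  detOn_empty _

theorem reducedSdet_union {σ₁ σ₂ : Finset ι} {i : ι} (hσ : Disjoint σ₁ σ₂) (hi : i ∉ σ₂)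
    (hW : ∀ a ∈ σ₁, ∀ b ∈ σ₂, W a b = W i b) :
    reducedSdet W i (σ₁ ∪ σ₂) = reducedSdet W i σ₁ * reducedSdet W i σ₂ := by
  unfold reducedSdet
  rw [erase_union_distrib, erase_eq_of_notMem hi,
    detOn_union (disjoint_of_subset_left (erase_subset i σ₁) hσ)]
  intro a ha b hb
  have hab : a ≠ b := fun h => disjoint_left.mp hσ (mem_of_mem_erase ha) (h ▸ hb)
  simp [one_apply, hab, hW a (mem_of_mem_erase ha) b hb]

theorem reducedSdet_eq_of_notMem {ρ : Finset ι} {i i' : ι} (hi : i ∉ ρ) (hi' : i' ∉ ρ)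
    (hW : ∀ j ∈ ρ, W i j = W i' j) : reducedSdet W i ρ = reducedSdet W i' ρ := by
  unfold reducedSdet
  rw [erase_eq_of_notMem hi, erase_eq_of_notMem hi']
  exact detOn_congr rfl fun a _ b hb => by rw [hW b hb]

end Cramer

section SimplyEmbedded

variable {ι κ R : Type*} [DecidableEq ι]

def IsSimplyEmbedded (W : Matrix ι ι R) (τ : Finset ι) : Prop :=
  ∀ j ∈ τ, ∀ i ∉ τ, ∀ i' ∉ τ, W i j = W i' j

variable (W : Matrix ι ι R)

theorem isSimplyEmbedded_compl_of_partition [Fintype ι] {τ : κ → Finset ι}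
    (hτ : ∀ ℓ, IsSimplyEmbedded W (τ ℓ)) (hdisj : Pairwise (Disjoint on τ))
    (hcover : ∀ i, ∃ ℓ, i ∈ τ ℓ) (ℓ : κ) : IsSimplyEmbedded W (τ ℓ)ᶜ := by
  intro j hj i hi i' hi'
  obtain ⟨m, hm⟩ := hcover j
  have hmℓ : ℓ ≠ m := by rintro rfl; exact mem_compl.mp hj hm
  exact hτ m j hm i (disjoint_left.mp (hdisj hmℓ) (notMem_compl.mp hi))
    i' (disjoint_left.mp (hdisj hmℓ) (notMem_compl.mp hi'))

variable [CommRing R]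

theorem reducedSdet_eq_mul_inter_sdiff [Fintype ι] {τ : Finset ι} (hτ : IsSimplyEmbedded W τ)
    (hτc : IsSimplyEmbedded W τᶜ) (σ : Finset ι) (i : ι) :
    reducedSdet W i σ = reducedSdet W i (σ ∩ τ) * reducedSdet W i (σ \ τ) := by
  have hdisj : Disjoint (σ ∩ τ) (σ \ τ) := disjoint_sdiff_inter σ τ |>.symm
  conv_lhs => rw [← sdiff_union_inter σ τ]
  by_cases hi : i ∈ τ
  · rw [union_comm]
    refine reducedSdet_union W hdisj (fun h => (mem_sdiff.mp h).2 hi) fun a ha b hb => ?_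
    exact hτc b (mem_compl.mpr (mem_sdiff.mp hb).2) a (notMem_compl.mpr (mem_inter.mp ha).2)
      i (notMem_compl.mpr hi)
  · rw [reducedSdet_union W hdisj.symm (fun h => hi (mem_inter.mp h).2), mul_comm]
    exact fun a ha b hb => hτ b (mem_inter.mp hb).2 a (mem_sdiff.mp ha).2 i hi

theorem reducedSdet_eq_prod_of_partition [Fintype ι] [Fintype κ] [DecidableEq κ]
    {τ : κ → Finset ι} (hτ : ∀ ℓ, IsSimplyEmbedded W (τ ℓ)) (hdisj : Pairwise (Disjoint on τ))
    (hcover : ∀ i, ∃ ℓ, i ∈ τ ℓ) (σ : Finset ι) (i : ι) :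
    reducedSdet W i σ = ∏ ℓ, reducedSdet W i (σ ∩ τ ℓ) := by
  have key : ∀ L : Finset κ,
      reducedSdet W i σ =
        reducedSdet W i (σ \ L.biUnion τ) * ∏ ℓ ∈ L, reducedSdet W i (σ ∩ τ ℓ) := by
    intro L
    induction L using Finset.induction_on with
    | empty => simp
    | insert ℓ L hℓ ih =>
      have hrest : (σ \ L.biUnion τ) ∩ τ ℓ = σ ∩ τ ℓ := by
        ext x
        simp only [mem_inter, mem_sdiff, mem_biUnion]
        refine ⟨fun h => ⟨h.1.1, h.2⟩, fun h => ⟨⟨h.1, fun ⟨m, hm, hx⟩ => ?_⟩, h.2⟩⟩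
        exact disjoint_left.mp (hdisj (ne_of_mem_of_not_mem hm hℓ)) hx h.2
      rw [ih, reducedSdet_eq_mul_inter_sdiff W (hτ ℓ)
        (isSimplyEmbedded_compl_of_partition W hτ hdisj hcover ℓ), hrest, prod_insert hℓ,
        biUnion_insert, sdiff_sdiff_left, sup_eq_union, union_comm]
      ring
  have hempty : σ \ univ.biUnion τ = ∅ := by
    simpa [eq_empty_iff_forall_notMem] using fun x _ => hcover x
  rw [key univ, hempty, reducedSdet_empty, one_mul]

end SimplyEmbedded

theorem strongly_simply_embedded_full_factorization_general (n N : ℕ)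
    (W : Matrix (Fin n) (Fin n) ℝ) (θ : ℝ) (hθ : 0 < θ)
    (τ : Fin N → Finset (Fin n))
    (hdisj : ∀ ℓ ℓ', ℓ ≠ ℓ' → Disjoint (τ ℓ) (τ ℓ'))
    (hcover : ∀ i : Fin n, ∃ ℓ, i ∈ τ ℓ)
    (hsse : ∀ ℓ, ∀ j ∈ τ ℓ, ∀ i ∉ τ ℓ, ∀ i' ∉ τ ℓ, W i j = W i' j)
    (σ : Finset (Fin n)) :
    (∀ i : Fin n, sdet W θ σ i =
        θ ^ (1 - (((Finset.univ.filter fun ℓ : Fin N => (σ ∩ τ ℓ).Nonempty).card : ℤ))) *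
          ∏ ℓ ∈ Finset.univ.filter (fun ℓ : Fin N => (σ ∩ τ ℓ).Nonempty),
            sdet W θ (σ ∩ τ ℓ) i) ∧
    (∀ ℓ, ∀ i ∉ τ ℓ, ∀ i' ∉ τ ℓ, sdet W θ (σ ∩ τ ℓ) i = sdet W θ (σ ∩ τ ℓ) i') := by
  constructor
  · intro i
    have hprod : ∏ ℓ with (σ ∩ τ ℓ).Nonempty, reducedSdet W i (σ ∩ τ ℓ) =
        ∏ ℓ, reducedSdet W i (σ ∩ τ ℓ) := by
      refine prod_filter_of_ne fun ℓ _ hne => nonempty_iff_ne_empty.mpr fun h => ?_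
      exact hne (h ▸ reducedSdet_empty W i)
    simp_rw [sdet_eq_mul_reducedSdet, prod_mul_distrib, prod_const, hprod,
      ← reducedSdet_eq_prod_of_partition W hsse (fun _ _ h => hdisj _ _ h) hcover, ← mul_assoc,
      ← zpow_natCast, ← zpow_add₀ hθ.ne', sub_add_cancel, zpow_one]
  · intro ℓ i hi i' hi'
    have hnot : ∀ {k}, k ∉ τ ℓ → k ∉ σ ∩ τ ℓ := fun hk h => hk (mem_inter.mp h).2
    rw [sdet_eq_mul_reducedSdet, sdet_eq_mul_reducedSdet, reducedSdet_eq_of_notMem W (hnot hi)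
      (hnot hi') fun j hj => hsse ℓ j (mem_inter.mp hj).2 i hi i' hi']

/-- Full factorization for strongly simply-embedded partitions (TLN version): if the
nodes of a nondegenerate TLN (W, θ), θ > 0 uniform, are partitioned into
τ_1,...,τ_N such that every node j ∈ τ_ℓ sends a common weight γ_j to all nodes
outside τ_ℓ, then for σ ⊆ [n] with σ_ℓ = σ ∩ τ_ℓ and I = {ℓ : σ_ℓ ≠ ∅}:
s_i^σ = θ^{1-|I|}·Π_{ℓ∈I} s_i^{σ_ℓ} for every i ∈ [n], and s_i^{σ_ℓ} takes the
same value for all i ∉ τ_ℓ. -/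
theorem strongly_simply_embedded_full_factorization (n N : ℕ)
    (W : Matrix (Fin n) (Fin n) ℝ) (θ : ℝ) (hθ : 0 < θ)
    (τ : Fin N → Finset (Fin n))
    (hdisj : ∀ ℓ ℓ', ℓ ≠ ℓ' → Disjoint (τ ℓ) (τ ℓ'))
    (hcover : ∀ i : Fin n, ∃ ℓ, i ∈ τ ℓ)
    (hsse : ∀ ℓ, ∀ j ∈ τ ℓ, ∀ i ∉ τ ℓ, ∀ i' ∉ τ ℓ, W i j = W i' j)
    (hnd : ∀ (ρ : Finset (Fin n)) (i : Fin n), sdet W θ ρ i ≠ 0)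
    (σ : Finset (Fin n)) :
    (∀ i : Fin n, sdet W θ σ i =
        θ ^ (1 - (((Finset.univ.filter fun ℓ : Fin N => (σ ∩ τ ℓ).Nonempty).card : ℤ))) *
          ∏ ℓ ∈ Finset.univ.filter (fun ℓ : Fin N => (σ ∩ τ ℓ).Nonempty),
            sdet W θ (σ ∩ τ ℓ) i) ∧
    (∀ ℓ, ∀ i ∉ τ ℓ, ∀ i' ∉ τ ℓ, sdet W θ (σ ∩ τ ℓ) i = sdet W θ (σ ∩ τ ℓ) i') :=
  strongly_simply_embedded_full_factorization_general n N W θ hθ τ hdisj hcover hsse σ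
end

section
/- Let 𝒮 = {j_1,...,j_m} ⊆ [n] and let FP ⊆ 𝒫([n])\{∅} be a collection closed under union with each singleton of 𝒮 (σ ∈ FP, j ∈ 𝒮, j ∉ σ ⟹ σ∪{j} ∈ FP) and closed under set difference with each singleton of 𝒮 (σ ∈ FP, j ∈ 𝒮, j ∈ σ, σ ≠ {j} ⟹ σ\{j} ∈ FP), and containing every singleton {j} for j ∈ 𝒮. Then FP ∪ {∅} is in bijection with (A ∪ {∅}) × 𝒫(𝒮), where A = {σ ∈ FP : σ ∩ 𝒮 = ∅}; specifically, every element of FP is uniquely of the form σ ∪ ω with σ ∈ A ∪ {∅} and ω ⊆ 𝒮 (not both empty). -/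
/-- Direct product structure of FP with singletons: let 𝒮 ⊆ [n] and FP be a
collection of nonempty subsets containing each singleton {j}, j ∈ 𝒮, closed under
union with singletons of 𝒮 and under set difference with singletons of 𝒮. Then
FP ∪ {∅} is in bijection with (A ∪ {∅}) × 𝒫(𝒮), where A = {σ ∈ FP : σ ∩ 𝒮 = ∅};
specifically, every ν ∈ FP is uniquely of the form σ ∪ ω with σ ∈ A ∪ {∅},
ω ⊆ 𝒮, not both empty. -/
theorem FP_direct_product_structure (n : ℕ)
    (S : Finset (Fin n)) (FP : Set (Finset (Fin n))) (hFP : ∅ ∉ FP)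
    (hsing : ∀ j ∈ S, ({j} : Finset (Fin n)) ∈ FP)
    (hunion : ∀ σ ∈ FP, ∀ j ∈ S, j ∉ σ → insert j σ ∈ FP)
    (hdiff : ∀ σ ∈ FP, ∀ j ∈ S, j ∈ σ → σ ≠ {j} → σ.erase j ∈ FP) :
    Nonempty ((↥(FP ∪ {∅}) : Type) ≃
        (↥({σ ∈ FP | σ ∩ S = ∅} ∪ {∅}) × {ω : Finset (Fin n) // ω ⊆ S})) ∧
      (∀ ν ∈ FP, ∃! p : Finset (Fin n) × Finset (Fin n),
        ((p.1 ∈ FP ∧ p.1 ∩ S = ∅) ∨ p.1 = ∅) ∧ p.2 ⊆ S ∧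
          ¬(p.1 = ∅ ∧ p.2 = ∅) ∧ ν = p.1 ∪ p.2) := by
  classical
  -- Lemma A: ν \ S is ∅ or in FP
  have lemA : ∀ ν ∈ FP, ν \ S = ∅ ∨ ν \ S ∈ FP := by
    intro ν hν
    generalize hk : (ν ∩ S).card = k
    induction k generalizing ν with
    | zero =>
      right
      have h0 : ν ∩ S = ∅ := Finset.card_eq_zero.mp hk
      rwa [Finset.sdiff_eq_self_of_disjoint
        (Finset.disjoint_iff_inter_eq_empty.mpr h0)]
    | succ k ih =>
      obtain ⟨j, hj⟩ := Finset.card_pos.mp (by omega : 0 < (ν ∩ S).card)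
      rw [Finset.mem_inter] at hj
      by_cases hν1 : ν = {j}
      · left
        subst hν1
        rw [Finset.sdiff_eq_empty_iff_subset]
        exact Finset.singleton_subset_iff.mpr hj.2
      · have h2 := hdiff ν hν j hj.2 hj.1 hν1
        have heq : ν.erase j \ S = ν \ S := by
          ext a
          simp only [Finset.mem_sdiff, Finset.mem_erase]
          constructor
          · rintro ⟨⟨_, ha⟩, hs⟩; exact ⟨ha, hs⟩
          · rintro ⟨ha, hs⟩
            exact ⟨⟨fun h => hs (h ▸ hj.2), ha⟩, hs⟩
        have hcard : ((ν.erase j) ∩ S).card = k := by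
          have : ν.erase j ∩ S = (ν ∩ S).erase j := by
            ext a
            simp only [Finset.mem_inter, Finset.mem_erase]
            tauto
          rw [this, Finset.card_erase_of_mem (Finset.mem_inter.mpr hj), hk]
          omega
        have := ih _ h2 hcard
        rwa [heq] at this
  -- Lemma B: unions σ ∪ ω are in FP when nonempty
  have lemB : ∀ ω : Finset (Fin n), ω ⊆ S → ∀ σ : Finset (Fin n),
      ((σ ∈ FP ∧ σ ∩ S = ∅) ∨ σ = ∅) → (σ ∪ ω).Nonempty → σ ∪ ω ∈ FP := by
    intro ω
    induction ω using Finset.induction_on with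
    | empty =>
      intro _ σ hσ hne
      rw [Finset.union_empty] at hne ⊢
      rcases hσ with ⟨h, _⟩ | h
      · exact h
      · exact absurd (h ▸ hne) (by simp)
    | @insert a ω ha ih =>
      intro hsub σ hσ _
      have haS : a ∈ S := hsub (Finset.mem_insert_self a ω)
      have hωS : ω ⊆ S := fun x hx => hsub (Finset.mem_insert_of_mem hx)
      have hins : σ ∪ insert a ω = insert a (σ ∪ ω) := by
        ext x; simp only [Finset.mem_union, Finset.mem_insert]; tauto
      rw [hins]
      by_cases hne : (σ ∪ ω).Nonempty
      · have hmem := ih hωS σ hσ hne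
        by_cases haσ : a ∈ σ ∪ ω
        · rwa [Finset.insert_eq_self.mpr haσ]
        · exact hunion _ hmem a haS haσ
      · have h0 : σ ∪ ω = ∅ := Finset.not_nonempty_iff_eq_empty.mp hne
        rw [h0]
        exact hsing a haS
  -- decomposition uniqueness helper
  have hkey : ∀ σ ω : Finset (Fin n), σ ∩ S = ∅ → ω ⊆ S →
      (σ ∪ ω) \ S = σ ∧ (σ ∪ ω) ∩ S = ω := by
    intro σ ω hσ hω
    constructor
    · rw [Finset.union_sdiff_distrib,
        Finset.sdiff_eq_self_of_disjoint (Finset.disjoint_iff_inter_eq_empty.mpr hσ),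
        Finset.sdiff_eq_empty_iff_subset.mpr hω, Finset.union_empty]
    · rw [Finset.union_inter_distrib_right, hσ, Finset.inter_eq_left.mpr hω,
        Finset.empty_union]
  constructor
  · -- the equivalence
    refine ⟨{
      toFun := fun ν => (⟨ν.1 \ S, ?_⟩, ⟨ν.1 ∩ S, Finset.inter_subset_right⟩)
      invFun := fun p => ⟨p.1.1 ∪ p.2.1, ?_⟩
      left_inv := ?_
      right_inv := ?_ }⟩
    · rcases ν.2 with h | h
      · rcases lemA ν.1 h with h0 | h1
        · right; simpa using h0
        · left; exact ⟨h1, Finset.sdiff_inter_self _ _⟩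
      · right
        have : ν.1 = ∅ := h
        simp [this]
    · by_cases h0 : p.1.1 ∪ p.2.1 = ∅
      · right; simpa using h0
      · left
        have hσ : (p.1.1 ∈ FP ∧ p.1.1 ∩ S = ∅) ∨ p.1.1 = ∅ := by
          rcases p.1.2 with h | h
          · exact Or.inl h
          · exact Or.inr h
        exact lemB p.2.1 p.2.2 p.1.1 hσ (Finset.nonempty_iff_ne_empty.mpr h0)
    · intro ν
      apply Subtype.ext
      exact Finset.sdiff_union_inter ν.1 S
    · intro p
      have hσ : p.1.1 ∩ S = ∅ := by
        rcases p.1.2 with h | h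
        · exact h.2
        · have : p.1.1 = ∅ := h
          simp [this]
      obtain ⟨h1, h2⟩ := hkey p.1.1 p.2.1 hσ p.2.2
      ext <;> simp [h1, h2]
  · -- uniqueness of decomposition
    intro ν hν
    refine ⟨(ν \ S, ν ∩ S), ⟨?_, Finset.inter_subset_right, ?_, ?_⟩, ?_⟩
    · rcases lemA ν hν with h | h
      · exact Or.inr h
      · exact Or.inl ⟨h, Finset.sdiff_inter_self _ _⟩
    · rintro ⟨h1, h2⟩
      simp only at h1 h2
      apply hFP
      have hν0 : ν = ∅ := by
        have h := Finset.sdiff_union_inter ν S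
        rw [h1, h2, Finset.union_empty] at h
        exact h.symm
      rwa [← hν0]
    · exact (Finset.sdiff_union_inter ν S).symm
    · rintro ⟨σ, ω⟩ ⟨hσ, hω, _, hdec⟩
      have hσS : σ ∩ S = ∅ := by
        rcases hσ with ⟨_, h⟩ | h
        · exact h
        · rw [show σ = ∅ from h]
          simp
      obtain ⟨h1, h2⟩ := hkey σ ω hσS hω
      simp only [hdec]
      exact Prod.ext h1.symm h2.symm
end
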